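/- Fix n ≥ 2, an index 1 ≤ i < n with j = i+1, a real number q, and points p₁, …, pₙ in a real inner product space E. Define p′ by p′_m = p_m for m ∉ {i, j}, p′_i = p_j, and p′_j = q·p_i + (1−q)·p_j. Let v ∈ ℝ^{𝓔ₙ} be the edge norm vector of p (so v(k,l) = ‖p_k − p_l‖²) and v′ the edge norm vector of p′. Then v′ = S_i · v, i.e. for every (k,l) ∈ 𝓔ₙ, v′(k,l) = Σ_{(k',l')} S_i[(k,l),(k',l')]·v(k',l'), where S_i is the matrix of the standard braid generator in the simplicial representation: row (i,j) of S_i is q²·e_{ij}; row (k,l) is e_{kl} if {k,l} ∩ {i,j} = ∅; row (i,l) is e_{jl} if l > j; row (k,i) is e_{kj} if k < i; row (k,j) is (q²−q)·e_{ij} + q·e_{ki} + (1−q)·e_{kj} if k < i; row (j,l) is (q²−q)·e_{ij} + q·e_{il} + (1−q)·e_{jl} if l > j. -/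

import Mathlib

/-- The index set `𝓔ₙ` of edges: pairs `(k,l)` with `k < l` in `Fin n`. -/
abbrev EdgeIdx (n : ℕ) : Type := {p : Fin n × Fin n // p.1 < p.2}

/-- The standard basis vector `e_{ab}` of `ℝ^{𝓔ₙ}`, viewed symmetrically in `a, b`
(with the convention `e_{mm} = 0`). -/
def eVec {n : ℕ} (a b : Fin n) : EdgeIdx n → ℝ :=
  fun c => if (c.1.1 = a ∧ c.1.2 = b) ∨ (c.1.1 = b ∧ c.1.2 = a) then 1 else 0

/-- The matrix `S_i` of the standard braid generator `s_{i,i+1}` (here `j = i+1`) in the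
simplicial representation (the LKB representation at `t = 1`), given row-wise. -/
def simpGenMatrix (n : ℕ) (i j : Fin n) (q : ℝ) : Matrix (EdgeIdx n) (EdgeIdx n) ℝ :=
  fun r c =>
    if r.1.1 = i ∧ r.1.2 = j then q ^ 2 * eVec i j c
    else if r.1.1 = i then eVec j r.1.2 c
    else if r.1.2 = i then eVec r.1.1 j c
    else if r.1.2 = j then
      (q ^ 2 - q) * eVec i j c + q * eVec r.1.1 i c + (1 - q) * eVec r.1.1 j c
    else if r.1.1 = j then
      (q ^ 2 - q) * eVec i j c + q * eVec i r.1.2 c + (1 - q) * eVec j r.1.2 c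
    else eVec r.1.1 r.1.2 c


/-- The edge norm vector of a labeled family of points: `v(k,l) = ‖p_k − p_l‖²`. -/
noncomputable def edgeNormVec {E : Type*} [NormedAddCommGroup E] [InnerProductSpace ℝ E]
    {n : ℕ} (p : Fin n → E) : EdgeIdx n → ℝ :=
  fun c => ‖p c.1.1 - p c.1.2‖ ^ 2

/-!
An edge of `p'` avoiding the new vertex `p' j = q • p i + (1 - q) • p j` is an edge of `p`
under relabelling, so its row of `S_i` is a coordinate vector. The rows through `p' j`
come from the vector form of Stewart's theorem,
  `‖x - (q • a + (1 - q) • b)‖² = q ‖x - a‖² + (1 - q) ‖x - b‖² - q (1 - q) ‖a - b‖²`,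
which for `x = b` gives the rescaled edge `q² ‖a - b‖²`.
-/

lemma eVec_self {n : ℕ} (a : Fin n) : eVec a a = 0 := by
  funext c
  simp only [eVec, or_self]
  exact if_neg fun ⟨h₁, h₂⟩ => c.2.ne (h₁.trans h₂.symm)

lemma eVec_comm {n : ℕ} (a b : Fin n) : eVec a b = eVec b a := by
  funext c
  simp only [eVec, or_comm]

lemma eVec_dotProduct_of_lt {n : ℕ} {a b : Fin n} (hab : a < b) (v : EdgeIdx n → ℝ) :
    eVec a b ⬝ᵥ v = v ⟨(a, b), hab⟩ := by
  rw [dotProduct, Finset.sum_eq_single_of_mem _ (Finset.mem_univ ⟨(a, b), hab⟩)]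
  · simp [eVec]
  · rintro ⟨⟨k, l⟩, hkl⟩ - hc
    have : ¬((k = a ∧ l = b) ∨ (k = b ∧ l = a)) := by
      rintro (⟨rfl, rfl⟩ | ⟨rfl, rfl⟩)
      · exact hc rfl
      · exact lt_asymm hab hkl
    simp [eVec, this]

lemma eVec_dotProduct_edgeNormVec {E : Type*} [NormedAddCommGroup E] [InnerProductSpace ℝ E]
    {n : ℕ} (p : Fin n → E) (a b : Fin n) :
    eVec a b ⬝ᵥ edgeNormVec p = ‖p a - p b‖ ^ 2 := by
  rcases lt_trichotomy a b with hab | rfl | hba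
  · exact eVec_dotProduct_of_lt hab _
  · simp [eVec_self]
  · rw [eVec_comm, eVec_dotProduct_of_lt hba, norm_sub_rev]
    rfl

lemma norm_sub_smul_add_one_sub_smul_sq {E : Type*} [NormedAddCommGroup E]
    [InnerProductSpace ℝ E] (x a b : E) (q : ℝ) :
    ‖x - (q • a + (1 - q) • b)‖ ^ 2 =
      q * ‖x - a‖ ^ 2 + (1 - q) * ‖x - b‖ ^ 2 - q * (1 - q) * ‖a - b‖ ^ 2 := by
  have : x - (q • a + (1 - q) • b) = q • (x - a) + (1 - q) • (x - b) := by module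
  rw [this, show a - b = (x - b) - (x - a) by abel]
  simp only [← real_inner_self_eq_norm_sq, inner_add_add_self, inner_sub_sub_self,
    real_inner_smul_left, real_inner_smul_right, real_inner_comm (x - a)]
  ring

lemma simpGenMatrix_row (n : ℕ) (i j : Fin n) (q : ℝ) (r : EdgeIdx n) :
    simpGenMatrix n i j q r =
      if r.1.1 = i ∧ r.1.2 = j then q ^ 2 • eVec i j
      else if r.1.1 = i then eVec j r.1.2
      else if r.1.2 = i then eVec r.1.1 j
      else if r.1.2 = j then
        (q ^ 2 - q) • eVec i j + q • eVec r.1.1 i + (1 - q) • eVec r.1.1 j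
      else if r.1.1 = j then
        (q ^ 2 - q) • eVec i j + q • eVec i r.1.2 + (1 - q) • eVec j r.1.2
      else eVec r.1.1 r.1.2 := by
  funext c
  simp only [simpGenMatrix]
  split_ifs <;> rfl

lemma simpGenMatrix_mulVec_edgeNormVec {E : Type*} [NormedAddCommGroup E]
    [InnerProductSpace ℝ E] {n : ℕ} (i j : Fin n) (q : ℝ) (p : Fin n → E) {k l : Fin n}
    (hkl : k < l) :
    (simpGenMatrix n i j q).mulVec (edgeNormVec p) ⟨(k, l), hkl⟩ =
      if k = i ∧ l = j then q ^ 2 * ‖p i - p j‖ ^ 2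
      else if k = i then ‖p j - p l‖ ^ 2
      else if l = i then ‖p k - p j‖ ^ 2
      else if l = j then
        (q ^ 2 - q) * ‖p i - p j‖ ^ 2 + q * ‖p k - p i‖ ^ 2 + (1 - q) * ‖p k - p j‖ ^ 2
      else if k = j then
        (q ^ 2 - q) * ‖p i - p j‖ ^ 2 + q * ‖p i - p l‖ ^ 2 + (1 - q) * ‖p j - p l‖ ^ 2
      else ‖p k - p l‖ ^ 2 := by
  rw [Matrix.mulVec, simpGenMatrix_row]
  split_ifs <;>
    simp only [add_dotProduct, smul_dotProduct, eVec_dotProduct_edgeNormVec, smul_eq_mul]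

theorem edgeNormVec_braid_generator_general {E : Type*} [NormedAddCommGroup E]
    [InnerProductSpace ℝ E] (n : ℕ) (i j : Fin n)
    (hij : (i : ℕ) + 1 = (j : ℕ)) (q : ℝ) (p p' : Fin n → E)
    (hp' : p' = fun m => if m = i then p j else if m = j then q • p i + (1 - q) • p j
      else p m) :
    edgeNormVec p' = (simpGenMatrix n i j q).mulVec (edgeNormVec p) := by
  have hij' : i < j := Fin.lt_def.2 (by omega)
  have hp'i : p' i = p j := by simp [hp']
  have hp'j : p' j = q • p i + (1 - q) • p j := by simp [hp', hij'.ne']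
  have hp'_of_ne : ∀ m, m ≠ i → m ≠ j → p' m = p m := fun m hi hj => by simp [hp', hi, hj]
  funext ⟨⟨k, l⟩, hkl⟩
  rw [simpGenMatrix_mulVec_edgeNormVec]
  change ‖p' k - p' l‖ ^ 2 = _
  split_ifs with hij_row hki hli hlj hkj
  · obtain ⟨rfl, rfl⟩ := hij_row
    rw [hp'i, hp'j, norm_sub_smul_add_one_sub_smul_sq, sub_self, norm_zero, norm_sub_rev]
    ring
  · subst hki
    rw [hp'i, hp'_of_ne l hkl.ne' fun hlj => hij_row ⟨rfl, hlj⟩]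
  · subst hli
    rw [hp'i, hp'_of_ne k hki (hkl.trans hij').ne]
  · subst hlj
    rw [hp'j, hp'_of_ne k hki hkl.ne, norm_sub_smul_add_one_sub_smul_sq]
    ring
  · subst hkj
    rw [hp'j, hp'_of_ne l hli hkl.ne', norm_sub_rev, norm_sub_smul_add_one_sub_smul_sq,
      norm_sub_rev (p l), norm_sub_rev (p l)]
    ring
  · rw [hp'_of_ne k hki hkj, hp'_of_ne l hli hlj]

/-- **The standard generator acts on edge norm vectors by `S_i`.** Let `j = i+1` and let
`p′` be obtained from `p` by rescaling the edge between vertices `i` and `j` by the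
factor `q` and relabeling by the transposition `(i j)`: `p′_i = p_j`,
`p′_j = q·p_i + (1−q)·p_j`, `p′_m = p_m` otherwise. Then the edge norm vector of `p′`
equals `S_i` applied to the edge norm vector of `p`. -/
theorem edgeNormVec_braid_generator {E : Type*} [NormedAddCommGroup E]
    [InnerProductSpace ℝ E] (n : ℕ) (hn : 2 ≤ n) (i j : Fin n)
    (hij : (i : ℕ) + 1 = (j : ℕ)) (q : ℝ) (p p' : Fin n → E)
    (hp' : p' = fun m => if m = i then p j else if m = j then q • p i + (1 - q) • p j
      else p m) :
    edgeNormVec p' = (simpGenMatrix n i j q).mulVec (edgeNormVec p) :=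
  edgeNormVec_braid_generator_general n i j hij q p p' hp'
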